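/- Let A be a deterministic complete finite automaton and ≡ a stable pair congruence on its states. If the quotient automaton B = A/≡ has a synchronizing word, and for every pair of states p, q of A with p ≡ q the pair (p,q) is stable in A, then A itself has a synchronizing word. -/

import Mathlib

/-!
Synchronize first in the quotient: after a synchronizing word `w` of `A/≡`, all states of `A`
lie in one congruence class. Within a class any two distinct states are merged by some word, and
applying a word keeps the states in one class, so repeatedly merging two of the finitely many
current states shrinks the set of reachable states to a single one.
-/

def dcaRun {Q A : Type*} (δ : Q → A → Q) (p : Q) (w : List A) : Q := w.foldl δ p

def Synchronizable {Q A : Type*} (δ : Q → A → Q) (p q : Q) : Prop :=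
  ∃ w : List A, dcaRun δ p w = dcaRun δ q w

def StablePair {Q A : Type*} (δ : Q → A → Q) (p q : Q) : Prop :=
  ∀ u : List A, Synchronizable δ (dcaRun δ p u) (dcaRun δ q u)

section

variable {Q A : Type*} (δ : Q → A → Q)

lemma dcaRun_append (p : Q) (u v : List A) :
    dcaRun δ p (u ++ v) = dcaRun δ (dcaRun δ p u) v :=
  List.foldl_append

lemma StablePair.synchronizable {p q : Q} (h : StablePair δ p q) : Synchronizable δ p q :=
  h []

lemma dcaRun_rel {r : Q → Q → Prop} (hr : ∀ (a : A) (p q : Q), r p q → r (δ p a) (δ q a))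
    (w : List A) {p q : Q} (hpq : r p q) : r (dcaRun δ p w) (dcaRun δ q w) := by
  induction w generalizing p q with
  | nil => exact hpq
  | cons a w ih => exact ih (hr a p q hpq)

lemma dcaRun_quotient_mk {s : Setoid Q} {δq : Quotient s → A → Quotient s}
    (hδq : ∀ (p : Q) (a : A), δq ⟦p⟧ a = ⟦δ p a⟧) (w : List A) (p : Q) :
    dcaRun δq ⟦p⟧ w = ⟦dcaRun δ p w⟧ := by
  induction w generalizing p with
  | nil => rfl
  | cons a w ih => exact (congrArg (dcaRun δq · w) (hδq p a)).trans (ih (δ p a))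

lemma rel_dcaRun_of_quotient_sync {s : Setoid Q} {δq : Quotient s → A → Quotient s}
    (hδq : ∀ (p : Q) (a : A), δq ⟦p⟧ a = ⟦δ p a⟧) {w : List A}
    (hw : ∀ x y : Quotient s, dcaRun δq x w = dcaRun δq y w) (p q : Q) :
    s.r (dcaRun δ p w) (dcaRun δ q w) := by
  have h := hw ⟦p⟧ ⟦q⟧
  rw [dcaRun_quotient_mk δ hδq, dcaRun_quotient_mk δ hδq] at h
  exact Quotient.exact h

lemma exists_sync_finset [DecidableEq Q] {r : Q → Q → Prop}
    (hr : ∀ (a : A) (p q : Q), r p q → r (δ p a) (δ q a))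
    (hsync : ∀ p q : Q, r p q → Synchronizable δ p q)
    (S : Finset Q) (hS : ∀ p ∈ S, ∀ q ∈ S, r p q) :
    ∃ w : List A, ∀ p ∈ S, ∀ q ∈ S, dcaRun δ p w = dcaRun δ q w := by
  induction hn : S.card using Nat.strong_induction_on generalizing S with
  | _ n ih =>
    by_cases hS1 : S.card ≤ 1
    · exact ⟨[], fun p hp q hq => Finset.card_le_one.mp hS1 p hp q hq⟩
    obtain ⟨p, hp, q, hq, hne⟩ := Finset.one_lt_card.mp (not_le.mp hS1)
    obtain ⟨v, hv⟩ := hsync p q (hS p hp q hq)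
    set S' := S.image (dcaRun δ · v)
    have hcard : S'.card < n := hn ▸ lt_of_le_of_ne Finset.card_image_le
      fun h => hne (Finset.injOn_of_card_image_eq h hp hq hv)
    have hS' : ∀ p' ∈ S', ∀ q' ∈ S', r p' q' := by
      simp only [S', Finset.forall_mem_image]
      exact fun x hx y hy => dcaRun_rel δ hr v (hS x hx y hy)
    obtain ⟨w, hw⟩ := ih _ hcard S' hS' rfl
    refine ⟨v ++ w, fun x hx y hy => ?_⟩
    rw [dcaRun_append, dcaRun_append]
    exact hw _ (Finset.mem_image_of_mem _ hx) _ (Finset.mem_image_of_mem _ hy)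

end

/-- If the quotient of an automaton by a stable pair congruence has a
synchronizing word, then the automaton itself has a synchronizing word. -/
theorem sync_of_quotient_sync {Q A : Type*} [Fintype Q] (δ : Q → A → Q)
    (s : Setoid Q)
    (hcong : ∀ (a : A) (p q : Q), s.r p q → s.r (δ p a) (δ q a))
    (hstable : ∀ p q : Q, s.r p q → StablePair δ p q)
    (δq : Quotient s → A → Quotient s)
    (hδq : ∀ (p : Q) (a : A), δq ⟦p⟧ a = ⟦δ p a⟧)
    (hsyncB : ∃ w : List A, ∀ x y : Quotient s, dcaRun δq x w = dcaRun δq y w) :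
    ∃ w : List A, ∀ p q : Q, dcaRun δ p w = dcaRun δ q w := by
  classical
  obtain ⟨u, hu⟩ := hsyncB
  obtain ⟨v, hv⟩ := exists_sync_finset δ hcong (fun p q h => (hstable p q h).synchronizable)
    (Finset.univ.image (dcaRun δ · u))
    (by simpa only [Finset.forall_mem_image] using
      fun p _ q _ => rel_dcaRun_of_quotient_sync δ hδq hu p q)
  refine ⟨u ++ v, fun p q => ?_⟩
  rw [dcaRun_append, dcaRun_append]
  exact hv _ (Finset.mem_image_of_mem _ (Finset.mem_univ p)) _
    (Finset.mem_image_of_mem _ (Finset.mem_univ q))
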